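/- Let p ∈ [1/2, 1), q = 1 − p. For every dynamic environment ξ : ℕ × ℤ → {0,1}, every n ∈ ℕ and every c ∈ ℤ, the quenched walk is stochastically dominated by the homogeneous walk with right-step probability p: Σ_{m∈ℤ, m ≥ c} q_n^0(ξ, m) ≤ Σ_{j∈ℕ, 2j−n ≥ c} C(n, j)·p^j·q^{n−j}, where C(n, j) is the binomial coefficient. -/

import Mathlib

open Finset

/-- Position after `k` steps of the nearest-neighbor path started at `x`
with up/down steps given by `s`. -/
def pathPos (x : ℤ) {n : ℕ} (s : Fin n → Bool) (k : ℕ) : ℤ :=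
  x + ∑ i ∈ Finset.univ.filter (fun i : Fin n => (i : ℕ) < k), (if s i then (1 : ℤ) else -1)

/-- The quenched `n`-step transition probability `q_n^x(ξ, m)` of the random walk in the
dynamic environment `ξ : ℕ × ℤ → {0,1}` started at `x`. -/
noncomputable def quenchedProb (p : ℝ) (ξ : ℕ → ℤ → Bool) (n : ℕ) (x m : ℤ) : ℝ :=
  ∑ s ∈ Finset.univ.filter (fun s : Fin n → Bool => pathPos x s n = m),
    ∏ k : Fin n, (if ξ k (pathPos x s k) = s k then p else 1 - p)

/-!
Conditioning on the first step, the probability `T_ξ(n, x)` of ending at or above `c` satisfies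
`T_ξ(n+1, x) = a T_ξ'(n, x+1) + b T_ξ'(n, x-1)` with `{a, b} = {p, q}` and `ξ'` the time-shifted
environment. For the homogeneous walk (`ξ ≡ 1`) the tail is nondecreasing in `x`, so putting the
larger weight `p ≥ q` on the up-step is the environment's worst case, and induction on `n` gives
`T_ξ ≤ T_1`. Finally `T_1` is the binomial tail: a path with `j` up-steps ends at `2j - n` and has
weight `p^j q^(n-j)`.
-/

@[simp]
lemma pathPos_zero (x : ℤ) {n : ℕ} (s : Fin n → Bool) : pathPos x s 0 = x := by
  simp [pathPos]

lemma pathPos_cons (x : ℤ) {n : ℕ} (b : Bool) (s : Fin n → Bool) (k : ℕ) :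
    pathPos x (Fin.cons b s) (k + 1) = pathPos (x + if b then 1 else -1) s k := by
  simp only [pathPos, sum_filter, Fin.sum_univ_succ, Fin.cons_zero, Fin.cons_succ,
    Fin.val_zero, Fin.val_succ, Nat.succ_lt_succ_iff, Nat.zero_lt_succ, if_true]
  ring

lemma pathPos_eq_add (x : ℤ) {n : ℕ} (s : Fin n → Bool) (k : ℕ) :
    pathPos x s k = x + pathPos 0 s k := by
  simp [pathPos]

lemma pathPos_zero_eq_two_mul_card_sub {n : ℕ} (s : Fin n → Bool) :
    pathPos 0 s n = 2 * #{i | s i} - n := by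
  have hcard := card_filter_add_card_filter_not (s := (univ : Finset (Fin n))) (fun i => s i)
  simp only [card_univ, Fintype.card_fin] at hcard
  simp only [pathPos, filter_true_of_mem fun (i : Fin n) _ => i.isLt, sum_ite, sum_const, zero_add,
    nsmul_eq_mul, mul_one, mul_neg_one]
  omega

noncomputable def pathWeight (p : ℝ) (ξ : ℕ → ℤ → Bool) (x : ℤ) {n : ℕ} (s : Fin n → Bool) :
    ℝ :=
  ∏ k : Fin n, (if ξ k (pathPos x s k) = s k then p else 1 - p)

lemma pathWeight_cons (p : ℝ) (ξ : ℕ → ℤ → Bool) (x : ℤ) {n : ℕ} (b : Bool)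
    (s : Fin n → Bool) :
    pathWeight p ξ x (Fin.cons b s) =
      (if ξ 0 x = b then p else 1 - p) *
        pathWeight p (fun k => ξ (k + 1)) (x + if b then 1 else -1) s := by
  simp [pathWeight, Fin.prod_univ_succ, pathPos_cons]

noncomputable def tailProb (p : ℝ) (ξ : ℕ → ℤ → Bool) (n : ℕ) (x c : ℤ) : ℝ :=
  ∑ s : Fin n → Bool, if c ≤ pathPos x s n then pathWeight p ξ x s else 0

lemma tsum_ite_le_quenchedProb_eq_tailProb (p : ℝ) (ξ : ℕ → ℤ → Bool) (n : ℕ) (x c : ℤ) :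
    ∑' m : ℤ, (if c ≤ m then quenchedProb p ξ n x m else 0) = tailProb p ξ n x c := by
  refine HasSum.tsum_eq ?_
  rw [tailProb]
  convert hasSum_sum fun s _ => hasSum_ite_eq (pathPos x s n)
    (if c ≤ pathPos x s n then pathWeight p ξ x s else 0) using 1
  ext m
  rw [quenchedProb, sum_filter]
  by_cases hc : c ≤ m
  · refine (if_pos hc).trans (sum_congr rfl fun s _ => ?_)
    by_cases hs : pathPos x s n = m
    · simp [hs, hc, pathWeight]
    · simp [hs, Ne.symm hs]
  · refine (if_neg hc).trans (sum_eq_zero fun s _ => ?_).symm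
    by_cases hs : pathPos x s n = m
    · simp [hs, hc]
    · simp [Ne.symm hs]

lemma tailProb_zero (p : ℝ) (ξ : ℕ → ℤ → Bool) (x c : ℤ) :
    tailProb p ξ 0 x c = if c ≤ x then 1 else 0 := by
  simp [tailProb, pathWeight]

lemma tailProb_succ (p : ℝ) (ξ : ℕ → ℤ → Bool) (n : ℕ) (x c : ℤ) :
    tailProb p ξ (n + 1) x c =
      (if ξ 0 x = true then p else 1 - p) * tailProb p (fun k => ξ (k + 1)) n (x + 1) c +
      (if ξ 0 x = false then p else 1 - p) * tailProb p (fun k => ξ (k + 1)) n (x - 1) c := by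
  rw [tailProb, ← (Fin.consEquiv _).sum_comp, Fintype.sum_prod_type, Fintype.sum_bool,
    tailProb, tailProb, mul_sum, mul_sum]
  congr 1 <;> refine sum_congr rfl fun s _ => ?_ <;>
    simp [Fin.consEquiv, pathWeight_cons, pathPos_cons, sub_eq_add_neg, mul_ite]

section Comparison

variable {p : ℝ}

lemma pathWeight_nonneg (hp0 : 0 ≤ p) (hp1 : p ≤ 1) (ξ : ℕ → ℤ → Bool) (x : ℤ) {n : ℕ}
    (s : Fin n → Bool) : 0 ≤ pathWeight p ξ x s :=
  prod_nonneg fun _ _ => by split_ifs <;> linarith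

lemma monotone_tailProb_spaceHomogeneous (hp0 : 0 ≤ p) (hp1 : p ≤ 1) (ζ : ℕ → Bool) (n : ℕ)
    (c : ℤ) : Monotone fun x => tailProb p (fun k _ => ζ k) n x c := by
  intro x y hxy
  refine sum_le_sum fun s _ => ?_
  have hweight_indep : pathWeight p (fun k _ => ζ k) x s = pathWeight p (fun k _ => ζ k) y s :=
    rfl
  rw [hweight_indep, pathPos_eq_add x, pathPos_eq_add y]
  split_ifs <;> first | exact le_rfl | exact pathWeight_nonneg hp0 hp1 _ y s | omega

lemma tailProb_le_tailProb_const_true (hp : 1 / 2 ≤ p) (hp1 : p ≤ 1) (ξ : ℕ → ℤ → Bool)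
    (n : ℕ) (x c : ℤ) : tailProb p ξ n x c ≤ tailProb p (fun _ _ => true) n x c := by
  induction n generalizing ξ x with
  | zero => rw [tailProb_zero, tailProb_zero]
  | succ n ih =>
    have hup := ih (fun k => ξ (k + 1)) (x + 1)
    have hdown := ih (fun k => ξ (k + 1)) (x - 1)
    have hmono := monotone_tailProb_spaceHomogeneous (by linarith) hp1 (fun _ => true) n c
      (show x - 1 ≤ x + 1 by omega)
    rw [tailProb_succ, tailProb_succ]
    cases ξ 0 x <;> simp only [Bool.true_eq_false, Bool.false_eq_true, if_true, if_false] <;>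
      nlinarith

end Comparison

lemma sum_boolFun_apply_card {M : Type*} [AddCommMonoid M] (n : ℕ) (f : ℕ → M) :
    ∑ s : Fin n → Bool, f #{i | s i} = ∑ j ∈ range (n + 1), n.choose j • f j := by
  have hbij : ∑ s : Fin n → Bool, f #{i | s i} = ∑ A ∈ (univ : Finset (Fin n)).powerset, f #A :=
    sum_nbij' (fun s => ({i | s i} : Finset (Fin n))) (fun A i => decide (i ∈ A))
      (by simp) (by simp)
      (fun s _ => by ext; simp) (fun A _ => by ext; simp) (fun _ _ => rfl)
  rw [hbij, sum_powerset_apply_card, card_univ, Fintype.card_fin]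

lemma pathWeight_const_true (p : ℝ) (x : ℤ) {n : ℕ} (s : Fin n → Bool) :
    pathWeight p (fun _ _ => true) x s = p ^ #{i | s i} * (1 - p) ^ (n - #{i | s i}) := by
  have hcard := card_filter_add_card_filter_not (s := (univ : Finset (Fin n))) (fun i => s i)
  simp only [card_univ, Fintype.card_fin] at hcard
  rw [pathWeight, prod_ite, prod_const, prod_const]
  simp only [eq_comm (a := true)]
  congr 2
  omega

lemma tailProb_const_true_eq_binomial_sum (p : ℝ) (n : ℕ) (c : ℤ) :
    tailProb p (fun _ _ => true) n 0 c = ∑ j ∈ range (n + 1),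
      if c ≤ 2 * (j : ℤ) - n then (n.choose j : ℝ) * p ^ j * (1 - p) ^ (n - j) else 0 := by
  simp only [tailProb, pathWeight_const_true, pathPos_zero_eq_two_mul_card_sub]
  rw [sum_boolFun_apply_card (f := fun j =>
    if c ≤ 2 * (j : ℤ) - n then p ^ j * (1 - p) ^ (n - j) else 0)]
  refine sum_congr rfl fun j _ => ?_
  split_ifs <;> simp [mul_assoc]

/-- For `p ∈ [1/2, 1)`, the quenched walk is stochastically dominated by the homogeneous
walk with right-step probability `p`:
`Σ_{m ≥ c} q_n^0(ξ, m) ≤ Σ_{j : 2j−n ≥ c} C(n,j) p^j q^{n−j}`. -/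
theorem quenched_dominated_by_homogeneous (p : ℝ) (hp : 1 / 2 ≤ p) (hp1 : p < 1)
    (ξ : ℕ → ℤ → Bool) (n : ℕ) (c : ℤ) :
    (∑' m : ℤ, if c ≤ m then quenchedProb p ξ n 0 m else 0) ≤
      ∑' j : ℕ, if c ≤ 2 * (j : ℤ) - n then (n.choose j : ℝ) * p ^ j * (1 - p) ^ (n - j)
        else 0 := by
  have hbinomial_support : ∀ j ∉ range (n + 1), (if c ≤ 2 * (j : ℤ) - n then
      (n.choose j : ℝ) * p ^ j * (1 - p) ^ (n - j) else 0) = 0 := fun j hj => by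
    rw [Nat.choose_eq_zero_of_lt (by simpa using hj)]
    simp
  rw [tsum_ite_le_quenchedProb_eq_tailProb, tsum_eq_sum hbinomial_support,
    ← tailProb_const_true_eq_binomial_sum]
  exact tailProb_le_tailProb_const_true hp hp1.le ξ n 0 c
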